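/- Let S be a positive integer and d̄ = 2^S. For every right stochastic matrix φ̄* ∈ 𝒮(d̄) and every Haar vector h ∈ ℋ, it holds that Σ_{j=1}^{d̄} |⟨φ̄*, h ⊗ e^{(j)}⟩| / ⟨h ⊗ e^{(j)}, h ⊗ e^{(j)}⟩ ≤ 1, where ⟨·,·⟩ is the Frobenius inner product. -/

import Mathlib

open scoped Classical

noncomputable section

/-- The Haar vector `h^(s,l)` in `ℝ^(2^S)` (1-based math indices mapped to 0-based `Fin`). -/
def haarVec (S s l : ℕ) : Fin (2 ^ S) → ℝ := fun i =>
  if 2 ^ s * (l - 1) ≤ (i : ℕ) ∧ (i : ℕ) < 2 ^ s * (l - 1) + 2 ^ (s - 1) then 1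
  else if 2 ^ s * (l - 1) + 2 ^ (s - 1) ≤ (i : ℕ) ∧ (i : ℕ) < 2 ^ s * l then -1
  else 0

/-- The Haar collection ℋ: the all-ones vector together with all `h^(s,l)`,
`s ∈ [1,S]`, `l ∈ [1, 2^(S-s)]`. -/
def haarSet (S : ℕ) : Set (Fin (2 ^ S) → ℝ) :=
  {fun _ => (1 : ℝ)} ∪
    {v | ∃ s l : ℕ, 1 ≤ s ∧ s ≤ S ∧ 1 ≤ l ∧ l ≤ 2 ^ (S - s) ∧ v = haarVec S s l}

/-- Outer product of two vectors, as a matrix. -/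
def outer {n : ℕ} (x y : Fin n → ℝ) : Matrix (Fin n) (Fin n) ℝ :=
  Matrix.of fun i j => x i * y j

/-- Frobenius inner product of two square matrices. -/
def frob {n : ℕ} (A B : Matrix (Fin n) (Fin n) ℝ) : ℝ := ∑ i, ∑ j, A i j * B i j

/-- The `j`-th canonical basis vector `e^(j)`. -/
def eVec {n : ℕ} (j : Fin n) : Fin n → ℝ := fun k => if k = j then 1 else 0

/-- Right stochastic matrix: nonnegative entries, each row sums to 1. -/
def IsStochastic {n : ℕ} (M : Matrix (Fin n) (Fin n) ℝ) : Prop :=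
  (∀ i j, 0 ≤ M i j) ∧ ∀ i, ∑ j, M i j = 1

/-- Membership in the probability simplex Δ(n). -/
def InSimplex {n : ℕ} (p : Fin n → ℝ) : Prop := (∀ i, 0 ≤ p i) ∧ ∑ i, p i = 1

/-- Action of a (stochastic) matrix on a distribution: `(φ(p))_j = Σ_i p_i φ_{i,j}`. -/
def act {n : ℕ} (M : Matrix (Fin n) (Fin n) ℝ) (p : Fin n → ℝ) : Fin n → ℝ :=
  fun j => ∑ i, p i * M i j

/-- `Σ_{i=1}^{n-1} 1[M_i ≠ M_{i+1}]`: the number of consecutive-row changes of `M`. -/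
def rowSwitch {n : ℕ} (M : Matrix (Fin n) (Fin n) ℝ) : ℕ :=
  (Finset.univ.filter fun i : Fin n =>
    ∃ h : (i : ℕ) + 1 < n, M i ≠ M ⟨(i : ℕ) + 1, h⟩).card

/-- Uniformity `d^unif_φ`: the frequency of the most frequent row of `φ`. -/
def dUnif {n : ℕ} (M : Matrix (Fin n) (Fin n) ℝ) : ℕ :=
  Finset.univ.sup fun i : Fin n => (Finset.univ.filter fun k : Fin n => M k = M i).card

/-- Degree of self-map `d^self_φ`: the number of rows `i` with `φ_i = e^(i)`. -/
def dSelf {n : ℕ} (M : Matrix (Fin n) (Fin n) ℝ) : ℕ :=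
  (Finset.univ.filter fun i : Fin n => M i = eVec i).card

/-! Writing `⟨A, x ⊗ e^(j)⟩ = (xᵀ A)_j`, the numerators are the entries of `act φ h`, and each
denominator is `‖h‖² = Σ h_i²`. A stochastic matrix contracts the `ℓ¹` norm under `act`, and for
a Haar vector `|h_i| = h_i²` entrywise, so the sum of numerators is at most `Σ |h_i| = ‖h‖²`. -/

theorem frob_outer_eVec {n : ℕ} (A : Matrix (Fin n) (Fin n) ℝ) (x : Fin n → ℝ) (j : Fin n) :
    frob A (outer x (eVec j)) = act A x j := by
  simp only [frob, outer, eVec, act, Matrix.of_apply, mul_ite, mul_one, mul_zero,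
    Finset.sum_ite_eq', Finset.mem_univ, if_true, mul_comm]

theorem frob_outer_eVec_self {n : ℕ} (x : Fin n → ℝ) (j : Fin n) :
    frob (outer x (eVec j)) (outer x (eVec j)) = ∑ i, x i ^ 2 := by
  rw [frob_outer_eVec]
  simp [act, outer, eVec, sq]

theorem IsStochastic.sum_abs_act_le {n : ℕ} {M : Matrix (Fin n) (Fin n) ℝ}
    (hM : IsStochastic M) (x : Fin n → ℝ) :
    ∑ j, |act M x j| ≤ ∑ i, |x i| :=
  calc ∑ j, |act M x j|
      ≤ ∑ j, ∑ i, |x i| * M i j := by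
        gcongr with j
        refine (Finset.abs_sum_le_sum_abs _ _).trans_eq ?_
        simp only [abs_mul, abs_of_nonneg (hM.1 _ j)]
    _ = ∑ i, |x i| := by
        simp only [Finset.sum_comm (γ := Fin n), ← Finset.mul_sum, hM.2, mul_one]

theorem abs_haarVec_eq_sq (S s l : ℕ) (i : Fin (2 ^ S)) :
    |haarVec S s l i| = haarVec S s l i ^ 2 := by
  unfold haarVec
  split_ifs <;> norm_num

theorem exists_haarVec_eq_one {S s l : ℕ} (hs : s ≤ S) (hl : 1 ≤ l) (hlS : l ≤ 2 ^ (S - s)) :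
    ∃ i : Fin (2 ^ S), haarVec S s l i = 1 := by
  have hlt : 2 ^ s * (l - 1) < 2 ^ S :=
    calc 2 ^ s * (l - 1) < 2 ^ s * l := by gcongr; omega
      _ ≤ 2 ^ s * 2 ^ (S - s) := by gcongr
      _ = 2 ^ S := by rw [← pow_add, Nat.add_sub_cancel' hs]
  exact ⟨⟨_, hlt⟩, if_pos ⟨le_rfl, Nat.lt_add_of_pos_right (Nat.two_pow_pos _)⟩⟩

theorem abs_eq_sq_of_mem_haarSet {S : ℕ} {h : Fin (2 ^ S) → ℝ} (hh : h ∈ haarSet S)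
    (i : Fin (2 ^ S)) : |h i| = h i ^ 2 := by
  rcases hh with rfl | ⟨s, l, -, -, -, -, rfl⟩
  · norm_num
  · exact abs_haarVec_eq_sq S s l i

theorem exists_eq_one_of_mem_haarSet {S : ℕ} {h : Fin (2 ^ S) → ℝ} (hh : h ∈ haarSet S) :
    ∃ i, h i = 1 := by
  rcases hh with rfl | ⟨s, l, -, hs, hl, hlS, rfl⟩
  · exact ⟨⟨0, Nat.two_pow_pos S⟩, rfl⟩
  · exact exists_haarVec_eq_one hs hl hlS

theorem sum_abs_coeff_stochastic_le_one_general (S : ℕ)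
    (φ : Matrix (Fin (2 ^ S)) (Fin (2 ^ S)) ℝ) (hφ : IsStochastic φ) :
    ∀ h ∈ haarSet S,
      ∑ j : Fin (2 ^ S),
        |frob φ (outer h (eVec j))| / frob (outer h (eVec j)) (outer h (eVec j)) ≤ 1 := by
  intro h hh
  obtain ⟨i₀, hi₀⟩ := exists_eq_one_of_mem_haarSet hh
  have hnorm : 0 < ∑ i, h i ^ 2 :=
    Finset.sum_pos' (fun i _ => sq_nonneg _) ⟨i₀, Finset.mem_univ _, by simp [hi₀]⟩
  simp_rw [frob_outer_eVec_self, frob_outer_eVec]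
  rw [← Finset.sum_div, div_le_one hnorm]
  calc ∑ j, |act φ h j| ≤ ∑ i, |h i| := hφ.sum_abs_act_le h
    _ = ∑ i, h i ^ 2 := Finset.sum_congr rfl fun i _ => abs_eq_sq_of_mem_haarSet hh i

/-- for every right stochastic `φ̄*` and every Haar vector `h ∈ ℋ`,
`Σ_j |⟨φ̄*, h ⊗ e^(j)⟩| / ⟨h ⊗ e^(j), h ⊗ e^(j)⟩ ≤ 1`. -/
theorem sum_abs_coeff_stochastic_le_one (S : ℕ) (hS : 1 ≤ S)
    (φ : Matrix (Fin (2 ^ S)) (Fin (2 ^ S)) ℝ) (hφ : IsStochastic φ) :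
    ∀ h ∈ haarSet S,
      ∑ j : Fin (2 ^ S),
        |frob φ (outer h (eVec j))| / frob (outer h (eVec j)) (outer h (eVec j)) ≤ 1 :=
  sum_abs_coeff_stochastic_le_one_general S φ hφ
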